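/- Completeness of the DPLL proof system: for every consistent valuation Γ and every CNF formula Δ, either there exists a model M with M ⊨ Γ and M ⊨ Δ, or the sequent Γ ⊢ Δ is derivable in the DPLL proof system. -/
import Mathlib


/-- A literal: a propositional variable (ℕ) with a sign. -/
structure Lit where
  var : ℕ
  sign : Bool
deriving DecidableEq

/-- The opposite literal. -/
def Lit.neg (l : Lit) : Lit := ⟨l.var, !l.sign⟩

/-- A clause: a finite set of literals, read disjunctively. -/
abbrev Clause := Finset Lit

/-- A CNF formula: a finite set of clauses, read conjunctively. -/
abbrev CNF := Finset Clause

/-- A valuation: a finite set of literals, read conjunctively. -/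
abbrev Valu := Finset Lit

/-- A model: a boolean assignment to literals respecting negation. -/
def IsModel (M : Lit → Bool) : Prop := ∀ l : Lit, M l = true ↔ ¬ (M (Lit.neg l) = true)

/-- `M ⊨ Γ` for a valuation (set of literals) `Γ`. -/
def SatVal (M : Lit → Bool) (Γ : Valu) : Prop := ∀ l ∈ Γ, M l = true

/-- `M ⊨ Δ` for a CNF formula `Δ`. -/
def SatCNF (M : Lit → Bool) (Δ : CNF) : Prop := ∀ C ∈ Δ, ∃ l ∈ C, M l = true

/-- A consistent valuation. -/
def Consistent (Γ : Valu) : Prop := ∀ l ∈ Γ, Lit.neg l ∉ Γ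

/-- The DPLL derivability relation `Γ ⊢ Δ`. -/
inductive DPLL : Valu → CNF → Prop
  | conflict (Γ : Valu) (Δ : CNF) : (∅ : Clause) ∈ Δ → DPLL Γ Δ
  | unit (Γ : Valu) (Δ : CNF) (l : Lit) : ({l} : Clause) ∈ Δ →
      DPLL (insert l Γ) (Δ.erase {l}) → DPLL Γ Δ
  | elim (Γ : Valu) (Δ : CNF) (C : Clause) (l : Lit) : l ∈ Γ → l ∈ C → C ∈ Δ →
      DPLL Γ (Δ.erase C) → DPLL Γ Δ
  | red (Γ : Valu) (Δ : CNF) (C : Clause) (l : Lit) : l ∈ Γ → Lit.neg l ∈ C → C ∈ Δ →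
      DPLL Γ (insert (C.erase (Lit.neg l)) (Δ.erase C)) → DPLL Γ Δ
  | split (Γ : Valu) (Δ : CNF) (l : Lit) :
      DPLL (insert l Γ) Δ → DPLL (insert (Lit.neg l) Γ) Δ → DPLL Γ Δ

/-- The sized DPLL derivability relation `Γ ⊢ⁿ Δ`. -/
inductive DPLLn : Valu → ℕ → CNF → Prop
  | conflict (Γ : Valu) (Δ : CNF) : (∅ : Clause) ∈ Δ → DPLLn Γ 0 Δ
  | unit (Γ : Valu) (Δ : CNF) (l : Lit) (n : ℕ) : ({l} : Clause) ∈ Δ →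
      DPLLn (insert l Γ) n (Δ.erase {l}) → DPLLn Γ (n + 1) Δ
  | elim (Γ : Valu) (Δ : CNF) (C : Clause) (l : Lit) (n : ℕ) : l ∈ Γ → l ∈ C → C ∈ Δ →
      DPLLn Γ n (Δ.erase C) → DPLLn Γ (n + 1) Δ
  | red (Γ : Valu) (Δ : CNF) (C : Clause) (l : Lit) (n : ℕ) : l ∈ Γ → Lit.neg l ∈ C → C ∈ Δ →
      DPLLn Γ n (insert (C.erase (Lit.neg l)) (Δ.erase C)) → DPLLn Γ (n + 1) Δ
  | split (Γ : Valu) (Δ : CNF) (l : Lit) (n m : ℕ) :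
      DPLLn (insert l Γ) n Δ → DPLLn (insert (Lit.neg l) Γ) m Δ → DPLLn Γ (n + m + 1) Δ

/-- The sized resolution derivability relation `Δ ⊢ᵣⁿ C`. -/
inductive Res : CNF → ℕ → Clause → Prop
  | sub (Δ : CNF) (C₀ C : Clause) : C₀ ∈ Δ → C₀ ⊆ C → Res Δ 0 C
  | res (Δ : CNF) (C C' : Clause) (l : Lit) (n m : ℕ) :
      Res Δ n (insert l C) → Res Δ m (insert (Lit.neg l) C') → Res Δ (n + m + 1) (C ∪ C')

lemma Lit.neg_neg (l : Lit) : l.neg.neg = l := by simp [Lit.neg]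

lemma Lit.neg_ne (l : Lit) : l.neg ≠ l := by
  obtain ⟨v, s⟩ := l; cases s <;> simp [Lit.neg]

/-- The default model induced by a valuation. -/
def modelOf (Γ : Valu) : Lit → Bool := fun l =>
  if l ∈ Γ then true else if l.neg ∈ Γ then false else l.sign

lemma modelOf_isModel (Γ : Valu) (hΓ : Consistent Γ) : IsModel (modelOf Γ) := by
  intro l
  unfold modelOf
  by_cases h1 : l ∈ Γ
  · have h2 : l.neg ∉ Γ := hΓ l h1
    simp [h1, h2, Lit.neg_neg]
  · by_cases h2 : l.neg ∈ Γ
    · simp [h1, h2, Lit.neg_neg]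
    · obtain ⟨v, s⟩ := l
      cases s <;> simp_all [Lit.neg]

lemma modelOf_satVal (Γ : Valu) : SatVal (modelOf Γ) Γ := by
  intro l hl; simp [modelOf, hl]

/-- If every literal of a clause in Δ is falsified by Γ, then Γ ⊢ Δ. -/
lemma derive_negclause (Γ : Valu) (C : Clause) : ∀ Δ : CNF, C ∈ Δ →
    (∀ l ∈ C, Lit.neg l ∈ Γ) → DPLL Γ Δ := by
  induction C using Finset.strongInduction with
  | _ C ih =>
    intro Δ hC hneg
    rcases C.eq_empty_or_nonempty with rfl | ⟨l₀, hl₀⟩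
    · exact DPLL.conflict _ _ hC
    · refine DPLL.red Γ Δ C (Lit.neg l₀) (hneg l₀ hl₀) (by rw [Lit.neg_neg]; exact hl₀) hC ?_
      rw [Lit.neg_neg]
      refine ih (C.erase l₀) (Finset.erase_ssubset hl₀) _ (Finset.mem_insert_self _ _) ?_
      intro l hl; exact hneg l (Finset.mem_of_mem_erase hl)

lemma consistent_insert (Γ : Valu) (l : Lit) (hΓ : Consistent Γ)
    (h1 : l ∉ Γ) (h2 : Lit.neg l ∉ Γ) : Consistent (insert l Γ) := by
  intro x hx
  rcases Finset.mem_insert.1 hx with rfl | hx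
  · intro hc
    rcases Finset.mem_insert.1 hc with hc | hc
    · exact Lit.neg_ne x hc
    · exact h2 hc
  · intro hc
    rcases Finset.mem_insert.1 hc with hc | hc
    · apply h2
      have : x = l.neg := by rw [← hc, Lit.neg_neg]
      rwa [← this]
    · exact hΓ x hx hc

/-- Variables of Δ undecided by Γ. -/
def undec (Γ : Valu) (Δ : CNF) : Finset ℕ :=
  (Δ.sup fun C => C.image Lit.var).filter
    (fun v => (⟨v, true⟩ : Lit) ∉ Γ ∧ (⟨v, false⟩ : Lit) ∉ Γ)

lemma main_lemma (Δ : CNF) : ∀ n (Γ : Valu), Consistent Γ → (undec Γ Δ).card ≤ n →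
    (∃ M : Lit → Bool, IsModel M ∧ SatVal M Γ ∧ SatCNF M Δ) ∨ DPLL Γ Δ := by
  intro n
  induction n with
  | zero =>
    intro Γ hΓ hcard
    have hund : undec Γ Δ = ∅ := Finset.card_eq_zero.1 (Nat.le_zero.1 hcard)
    -- every literal appearing in Δ is decided
    have hdec : ∀ C ∈ Δ, ∀ l ∈ C, l ∈ Γ ∨ Lit.neg l ∈ Γ := by
      intro C hC l hl
      by_contra hcon
      push_neg at hcon
      have hv : l.var ∈ Δ.sup fun C => C.image Lit.var :=
        Finset.mem_sup.2 ⟨C, hC, Finset.mem_image_of_mem Lit.var hl⟩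
      have hmem : l.var ∈ undec Γ Δ := by
        refine Finset.mem_filter.2 ⟨hv, ?_⟩
        obtain ⟨w, s⟩ := l
        cases s <;> simp [Lit.neg] at hcon <;> simp <;> tauto
      rw [hund] at hmem
      exact absurd hmem (Finset.notMem_empty _)
    by_cases hsat : SatCNF (modelOf Γ) Δ
    · exact Or.inl ⟨modelOf Γ, modelOf_isModel Γ hΓ, modelOf_satVal Γ, hsat⟩
    · right
      unfold SatCNF at hsat
      push_neg at hsat
      obtain ⟨C, hC, hfal⟩ := hsat
      refine derive_negclause Γ C Δ hC ?_
      intro l hl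
      rcases hdec C hC l hl with h | h
      · exact absurd (by simp [modelOf, h]) (hfal l hl)
      · exact h
  | succ n ih =>
    intro Γ hΓ hcard
    rcases (undec Γ Δ).eq_empty_or_nonempty with hund | ⟨v, hv⟩
    · exact ih Γ hΓ (by simp [hund])
    · have hvmem := Finset.mem_filter.1 hv
      have hlΓ : (⟨v, true⟩ : Lit) ∉ Γ := hvmem.2.1
      have hlnΓ : Lit.neg ⟨v, true⟩ ∉ Γ := hvmem.2.2
      have hpos : 1 ≤ (undec Γ Δ).card := Finset.card_pos.2 ⟨v, hv⟩
      have hsub : ∀ l' : Lit, l'.var = v →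
          (undec (insert l' Γ) Δ).card ≤ n := by
        intro l' hvar
        have hsubset : undec (insert l' Γ) Δ ⊆ (undec Γ Δ).erase v := by
          intro w hw
          have hw' := Finset.mem_filter.1 hw
          have hw1 : (⟨w, true⟩ : Lit) ∉ insert l' Γ := hw'.2.1
          have hw2 : (⟨w, false⟩ : Lit) ∉ insert l' Γ := hw'.2.2
          refine Finset.mem_erase.2 ⟨?_, Finset.mem_filter.2
            ⟨hw'.1, fun h => hw1 (Finset.mem_insert_of_mem h),
              fun h => hw2 (Finset.mem_insert_of_mem h)⟩⟩
          intro hwv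
          subst hwv
          obtain ⟨v', s⟩ := l'
          simp only [] at hvar
          subst hvar
          cases s
          · exact hw2 (Finset.mem_insert_self _ _)
          · exact hw1 (Finset.mem_insert_self _ _)
        have := Finset.card_le_card hsubset
        rw [Finset.card_erase_of_mem hv] at this
        omega
      have hc1 : Consistent (insert (⟨v, true⟩ : Lit) Γ) :=
        consistent_insert Γ _ hΓ hlΓ hlnΓ
      have hc2 : Consistent (insert (Lit.neg ⟨v, true⟩) Γ) :=
        consistent_insert Γ _ hΓ hlnΓ (by rw [Lit.neg_neg]; exact hlΓ)
      rcases ih (insert (⟨v, true⟩ : Lit) Γ) hc1 (hsub _ rfl) with ⟨M, hM, hMΓ, hMΔ⟩ | hd1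
      · exact Or.inl ⟨M, hM, fun x hx => hMΓ x (Finset.mem_insert_of_mem hx), hMΔ⟩
      · rcases ih (insert (Lit.neg ⟨v, true⟩) Γ) hc2 (hsub _ rfl)
          with ⟨M, hM, hMΓ, hMΔ⟩ | hd2
        · exact Or.inl ⟨M, hM, fun x hx => hMΓ x (Finset.mem_insert_of_mem hx), hMΔ⟩
        · exact Or.inr (DPLL.split Γ Δ ⟨v, true⟩ hd1 hd2)

/-- Completeness of the DPLL proof system. -/
theorem dpll_completeness (Γ : Valu) (Δ : CNF) (hΓ : Consistent Γ) :
    (∃ M : Lit → Bool, IsModel M ∧ SatVal M Γ ∧ SatCNF M Δ) ∨ DPLL Γ Δ :=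
  main_lemma Δ (undec Γ Δ).card Γ hΓ le_rfl
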